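/- arXiv:1510.04214 — 5 statements merged into one kernel-verified Lean document; each statement's English description precedes it below -/
import Mathlib

section
/- Let P, A, W be real n×n matrices with P ≻ 0, W ≻ 0, and let Π be a symmetric matrix with Π ≻ 0. Then Π ⪯ (P⁻¹ + Aᵀ W⁻¹ A)⁻¹ if and only if the block matrix [[P − Π, P Aᵀ], [A P, A P Aᵀ + W]] is positive semidefinite. -/
open Matrix

theorem stmt_1 {n : ℕ} (P A W Pim : Matrix (Fin n) (Fin n) ℝ)
    (hP : P.PosDef) (hW : W.PosDef) (hPims : Pim.IsSymm) (hPim : Pim.PosDef) :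
    ((P⁻¹ + Aᵀ * W⁻¹ * A)⁻¹ - Pim).PosSemidef ↔
      (Matrix.fromBlocks (P - Pim) (P * Aᵀ) (A * P) (A * P * Aᵀ + W)).PosSemidef := by
  have hPsymm : Pᵀ = P := hP.isHermitian
  have hD : (A * P * Aᵀ + W).PosDef := by
    have h1 : (A * P * Aᵀ).PosSemidef := by
      simpa using hP.posSemidef.mul_mul_conjTranspose_same A
    simpa [add_comm] using hW.add_posSemidef h1
  letI := hD.isUnit.invertible
  have hPAt : (P * Aᵀ)ᴴ = A * P := by
    simp [conjTranspose_eq_transpose_of_trivial, transpose_mul, hPsymm]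
  have hblocks : (Matrix.fromBlocks (P - Pim) (P * Aᵀ) (A * P) (A * P * Aᵀ + W)).PosSemidef ↔
      ((P - Pim) - (P * Aᵀ) * (A * P * Aᵀ + W)⁻¹ * (A * P)).PosSemidef := by
    have h2 := Matrix.PosDef.fromBlocks₂₂ (P - Pim) (P * Aᵀ) hD
    rw [hPAt] at h2
    exact h2
  have hPinv : P⁻¹⁻¹ = P := Matrix.nonsing_inv_nonsing_inv P hP.det_pos.ne'.isUnit
  have hWinv : W⁻¹⁻¹ = W := Matrix.nonsing_inv_nonsing_inv W hW.det_pos.ne'.isUnit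
  have hwood : (P⁻¹ + Aᵀ * W⁻¹ * A)⁻¹ = P - P * Aᵀ * (A * P * Aᵀ + W)⁻¹ * (A * P) := by
    have h := Matrix.add_mul_mul_inv_eq_sub P⁻¹ Aᵀ W⁻¹ A
      (Matrix.isUnit_nonsing_inv_iff.2 hP.isUnit)
      (Matrix.isUnit_nonsing_inv_iff.2 hW.isUnit) ?_
    · rw [h, hPinv, hWinv, add_comm W]
      noncomm_ring
    · rw [hPinv, hWinv, add_comm W]
      exact hD.isUnit
  rw [hwood, hblocks]
  have heq : P - P * Aᵀ * (A * P * Aᵀ + W)⁻¹ * (A * P) - Pim =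
      P - Pim - P * Aᵀ * (A * P * Aᵀ + W)⁻¹ * (A * P) := by noncomm_ring
  rw [heq]
end

section
/- Let P ≻ 0 be an n×n real matrix, C an m×n real matrix, and V ≻ 0 an m×m real matrix, and suppose P⁻¹ − (A P Aᵀ + W)⁻¹ = Cᵀ V⁻¹ C with A P Aᵀ + W ≻ 0. Then (1/2) log det(A P Aᵀ + W) − (1/2) log det P = −(1/2) log det(I − V^{-1/2} C P Cᵀ V^{-1/2}). -/
open Matrix
open scoped MatrixOrder

theorem stmt_2 {n m : ℕ} (P A W : Matrix (Fin n) (Fin n) ℝ)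
    (C : Matrix (Fin m) (Fin n) ℝ) (V : Matrix (Fin m) (Fin m) ℝ)
    (hP : P.PosDef) (hV : V.PosDef) (hAPW : (A * P * Aᵀ + W).PosDef)
    (hsnr : P⁻¹ - (A * P * Aᵀ + W)⁻¹ = Cᵀ * V⁻¹ * C) :
    (1 / 2) * Real.log (A * P * Aᵀ + W).det - (1 / 2) * Real.log P.det =
      -((1 / 2) * Real.log
        (1 - CFC.sqrt V⁻¹ * (C * P * Cᵀ) * CFC.sqrt V⁻¹).det) := by
  set S := A * P * Aᵀ + W with hS
  set R := CFC.sqrt V⁻¹ with hRdef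
  have hRR : R * R = V⁻¹ := CFC.sqrt_mul_sqrt_self V⁻¹ (Matrix.nonneg_iff_posSemidef.mpr hV.inv.posSemidef)
  have hRherm : R.IsHermitian := (Matrix.nonneg_iff_posSemidef.mp (CFC.sqrt_nonneg V⁻¹)).1
  have hRT : Rᵀ = R := by
    have := hRherm.eq
    exact (Matrix.conjTranspose_eq_transpose_of_trivial R).symm.trans this
  haveI : Invertible P := hP.isUnit.invertible
  have hSinv : S⁻¹ = P⁻¹ - Cᵀ * V⁻¹ * C := by
    rw [← hsnr, sub_sub_cancel]
  have hfac : S⁻¹ = P⁻¹ * (1 - P * (Cᵀ * V⁻¹ * C)) := by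
    rw [hSinv, Matrix.mul_sub, Matrix.mul_one, ← Matrix.mul_assoc,
      Matrix.inv_mul_of_invertible, Matrix.one_mul]
  have hkey : (1 - P * (Cᵀ * V⁻¹ * C)).det = (1 - R * (C * P * Cᵀ) * R).det := by
    have h1 : P * (Cᵀ * V⁻¹ * C) = (P * Cᵀ * R) * (R * C) := by
      rw [← hRR]; simp only [Matrix.mul_assoc]
    have h2 : R * (C * P * Cᵀ) * R = (R * C) * (P * Cᵀ * R) := by
      simp only [Matrix.mul_assoc]
    rw [h1, h2]
    have := Matrix.det_one_add_mul_comm (P * Cᵀ * R) (-(R * C))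
    simpa [Matrix.mul_neg, Matrix.neg_mul, sub_eq_add_neg] using this
  have hdetS : S.det ≠ 0 := hAPW.det_pos.ne'
  have hdetP : P.det ≠ 0 := hP.det_pos.ne'
  have hdetSinv : S⁻¹.det = (S.det)⁻¹ := by simp [Matrix.det_nonsing_inv, Ring.inverse_eq_inv]
  have hdetfac : (S.det)⁻¹ = (P.det)⁻¹ * (1 - R * (C * P * Cᵀ) * R).det := by
    rw [← hdetSinv, hfac, Matrix.det_mul, hkey]
    simp [Matrix.det_nonsing_inv, Ring.inverse_eq_inv]
  have hd : (1 - R * (C * P * Cᵀ) * R).det = P.det / S.det := by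
    field_simp at hdetfac ⊢
    linarith [hdetfac]
  rw [hd, Real.log_div hdetP hdetS]
  ring
end

section
/- Let Σ be a probability measure on a finite alphabet of uniquely decodable binary codewords, with codeword lengths l. Then the expected codeword length E[l] is bounded below by the Shannon entropy H of the distribution: H ≤ E[l] (entropy in bits). -/
open scoped BigOperators

open Finset in
/-- Kraft–McMillan inequality for uniquely decodable codes. -/
theorem kraft_mcmillan_aux {ι : Type*} [Fintype ι] (code : ι → List Bool)
    (hud : ∀ s t : List ι, (s.map code).flatten = (t.map code).flatten → s = t) :
    ∑ i, ((2:ℝ))⁻¹ ^ (code i).length ≤ 1 := by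
  classical
  set l : ι → ℕ := fun i => (code i).length with hl
  set S : ℝ := ∑ i, ((2:ℝ))⁻¹ ^ l i with hSdef
  set M : ℕ := Finset.univ.sup l with hM
  -- the encoding map on tuples is injective
  have hFinj : ∀ n : ℕ, Function.Injective
      (fun g : Fin n → ι => ((List.ofFn g).map code).flatten) := by
    intro n g g' h
    have := hud (List.ofFn g) (List.ofFn g') h
    exact funext fun k => by
      have := congrArg (fun L => L[k.val]?) this
      simpa [List.getElem?_ofFn] using this
  -- length of the encoding of a tuple
  have hFlen : ∀ {n : ℕ} (g : Fin n → ι),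
      (((List.ofFn g).map code).flatten).length = ∑ k, l (g k) := by
    intro n g
    rw [List.length_flatten, List.map_ofFn, List.map_ofFn, List.sum_ofFn]
    rfl
  -- key counting bound
  have key : ∀ n : ℕ, S ^ n ≤ n * M + 1 := by
    intro n
    have expand : S ^ n = ∑ g : Fin n → ι, ((2:ℝ))⁻¹ ^ (∑ k, l (g k)) := by
      calc S ^ n = ∏ _k : Fin n, S := by
            rw [Finset.prod_const, Finset.card_univ, Fintype.card_fin]
        _ = ∑ g ∈ Fintype.piFinset (fun _ : Fin n => Finset.univ),
              ∏ k, ((2:ℝ))⁻¹ ^ l (g k) := Finset.prod_univ_sum _ _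
        _ = ∑ g : Fin n → ι, ((2:ℝ))⁻¹ ^ (∑ k, l (g k)) := by
            rw [Fintype.piFinset_univ]
            exact Finset.sum_congr rfl fun g _ => Finset.prod_pow_eq_pow_sum _ _ _
    rw [expand, Finset.sum_comp (fun b : ℕ => ((2:ℝ))⁻¹ ^ b) (fun g : Fin n → ι => ∑ k, l (g k))]
    -- each fiber over total length b has at most 2^b elements
    have fiber : ∀ b : ℕ,
        ((Finset.univ.filter (fun g : Fin n → ι => (∑ k, l (g k)) = b)).card : ℝ)
          ≤ 2 ^ b := by
      intro b
      have : (Finset.univ.filter (fun g : Fin n → ι => (∑ k, l (g k)) = b)).card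
          ≤ (Finset.univ : Finset (Fin b → Bool)).card := by
        apply Finset.card_le_card_of_injOn
          (fun g (k : Fin b) => (((List.ofFn g).map code).flatten).getD k false)
        · intro g _; exact Finset.mem_univ _
        · intro g hg g' hg' h
          simp only [Finset.mem_coe, Finset.mem_filter] at hg hg'
          have lg : (((List.ofFn g).map code).flatten).length = b := by
            rw [hFlen]; exact hg.2
          have lg' : (((List.ofFn g').map code).flatten).length = b := by
            rw [hFlen]; exact hg'.2
          apply hFinj n
          show ((List.ofFn g).map code).flatten = ((List.ofFn g').map code).flatten
          apply List.ext_getElem (by rw [lg, lg'])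
          intro m h1 h2
          have hm : m < b := lg ▸ h1
          have := congrFun h ⟨m, hm⟩
          simpa only [List.getD_eq_getElem _ _ h1, List.getD_eq_getElem _ _ h2] using this
      calc ((Finset.univ.filter (fun g : Fin n → ι => (∑ k, l (g k)) = b)).card : ℝ)
          ≤ ((Finset.univ : Finset (Fin b → Bool)).card : ℝ) := by exact_mod_cast this
        _ = 2 ^ b := by
            rw [Finset.card_univ]
            simp
    -- total lengths are at most n * M
    have himg : (Finset.image (fun g : Fin n → ι => ∑ k, l (g k)) Finset.univ)
        ⊆ Finset.range (n * M + 1) := by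
      intro b hb
      simp only [Finset.mem_image] at hb
      obtain ⟨g, -, rfl⟩ := hb
      rw [Finset.mem_range, Nat.lt_succ_iff]
      calc ∑ k, l (g k) ≤ ∑ _k : Fin n, M :=
            Finset.sum_le_sum fun k _ => Finset.le_sup (Finset.mem_univ (g k))
        _ = n * M := by simp [Finset.sum_const, mul_comm]
    calc ∑ b ∈ Finset.image (fun g : Fin n → ι => ∑ k, l (g k)) Finset.univ,
            ((Finset.univ.filter (fun g : Fin n → ι => (∑ k, l (g k)) = b)).card)
              • ((2:ℝ))⁻¹ ^ b
        ≤ ∑ b ∈ Finset.image (fun g : Fin n → ι => ∑ k, l (g k)) Finset.univ, (1:ℝ) := by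
          apply Finset.sum_le_sum
          intro b _
          rw [nsmul_eq_mul]
          calc ((Finset.univ.filter (fun g : Fin n → ι => (∑ k, l (g k)) = b)).card : ℝ)
                * ((2:ℝ))⁻¹ ^ b
              ≤ (2:ℝ) ^ b * ((2:ℝ))⁻¹ ^ b := by
                apply mul_le_mul_of_nonneg_right (fiber b)
                positivity
            _ = 1 := by
                rw [← mul_pow]
                norm_num
      _ = (Finset.image (fun g : Fin n → ι => ∑ k, l (g k)) Finset.univ).card := by
          rw [Finset.sum_const, nsmul_eq_mul, mul_one]
      _ ≤ ((Finset.range (n * M + 1)).card : ℝ) := by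
          exact_mod_cast Finset.card_le_card himg
      _ ≤ n * M + 1 := by
          rw [Finset.card_range]; push_cast; exact le_refl _
  -- conclude S ≤ 1
  by_contra hS1
  push_neg at hS1
  have hS0 : 1 < S := hS1
  set ε : ℝ := (S - 1) ^ 2 with hε
  have hεpos : 0 < ε := by
    rw [hε]; have : (0:ℝ) < S - 1 := by linarith
    positivity
  obtain ⟨n, hn⟩ := exists_nat_gt ((2 * M + 1) / ε)
  have hnR : (0:ℝ) < n := by
    have h0 : (0:ℝ) ≤ (2 * (M:ℝ) + 1) / ε := div_nonneg (by positivity) hεpos.le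
    exact h0.trans_lt hn
  have hn1 : (1:ℝ) ≤ n := by
    have : n ≠ 0 := by rintro rfl; simp at hnR
    exact_mod_cast Nat.one_le_iff_ne_zero.2 this
  have h1 : (n : ℝ) * (S - 1) ≤ S ^ n := by
    have := one_add_mul_le_pow (a := S - 1) (by linarith) n
    have h0 : (0:ℝ) ≤ 1 := zero_le_one
    calc (n : ℝ) * (S - 1) ≤ 1 + n * (S - 1) := by
          have : (0:ℝ) ≤ (n:ℝ) * (S - 1) := by
            have : (0:ℝ) ≤ (n:ℝ) := Nat.cast_nonneg n
            nlinarith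
          linarith
      _ ≤ (1 + (S - 1)) ^ n := this
      _ = S ^ n := by ring_nf
  have h2 : S ^ (2 * n) ≤ 2 * n * M + 1 := by
    have := key (2 * n)
    calc S ^ (2 * n) ≤ (2 * n : ℕ) * M + 1 := this
      _ = 2 * n * M + 1 := by push_cast; ring
  have h3 : ((n : ℝ) * (S - 1)) ^ 2 ≤ S ^ (2 * n) := by
    rw [two_mul, pow_add]
    have hnn : (0:ℝ) ≤ (n : ℝ) * (S - 1) := by
      have : (0:ℝ) ≤ (n:ℝ) := Nat.cast_nonneg n
      nlinarith
    calc ((n : ℝ) * (S - 1)) ^ 2 = ((n : ℝ) * (S - 1)) * ((n : ℝ) * (S - 1)) := sq _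
      _ ≤ S ^ n * S ^ n := by
          apply mul_le_mul h1 h1 hnn
          positivity
  have h4 : (n:ℝ) ^ 2 * ε ≤ 2 * n * M + 1 := by
    calc (n:ℝ) ^ 2 * ε = ((n : ℝ) * (S - 1)) ^ 2 := by rw [hε]; ring
      _ ≤ S ^ (2 * n) := h3
      _ ≤ 2 * n * M + 1 := h2
  have h5 : (n:ℝ) * ε ≤ 2 * M + 1 := by
    have hnpos : (0:ℝ) < n := by linarith
    nlinarith
  have : (2 * M + 1 : ℝ) < n * ε := by
    rw [div_lt_iff₀ hεpos] at hn
    linarith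
  linarith

theorem stmt_8 {ι : Type*} [Fintype ι] (code : ι → List Bool) (p : ι → ℝ)
    (hud : ∀ s t : List ι, (s.map code).flatten = (t.map code).flatten → s = t)
    (hp0 : ∀ i, 0 ≤ p i) (hp1 : ∑ i, p i = 1) :
    (- ∑ i, p i * Real.logb 2 (p i)) ≤ ∑ i, p i * (code i).length := by
  classical
  set q : ι → ℝ := fun i => ((2:ℝ))⁻¹ ^ (code i).length with hq
  have hqpos : ∀ i, 0 < q i := fun i => by positivity
  have hkraft : ∑ i, q i ≤ 1 := kraft_mcmillan_aux code hud
  -- Gibbs: per-term bound  p * (log q - log p) ≤ q - p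
  have gibbs : ∀ i, p i * (Real.log (q i) - Real.log (p i)) ≤ q i - p i := by
    intro i
    rcases eq_or_lt_of_le (hp0 i) with h | h
    · rw [← h]; simpa using (hqpos i).le
    · have hqp : 0 < q i / p i := div_pos (hqpos i) h
      have hlog : Real.log (q i) - Real.log (p i) ≤ q i / p i - 1 := by
        have := Real.log_le_sub_one_of_pos hqp
        rwa [Real.log_div (hqpos i).ne' h.ne'] at this
      calc p i * (Real.log (q i) - Real.log (p i)) ≤ p i * (q i / p i - 1) :=
            mul_le_mul_of_nonneg_left hlog h.le
        _ = q i - p i := by field_simp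
  have hsum : ∑ i, p i * (Real.log (q i) - Real.log (p i)) ≤ 0 := by
    calc ∑ i, p i * (Real.log (q i) - Real.log (p i)) ≤ ∑ i, (q i - p i) :=
          Finset.sum_le_sum fun i _ => gibbs i
      _ = (∑ i, q i) - ∑ i, p i := Finset.sum_sub_distrib _ _
      _ ≤ 1 - 1 := by rw [hp1]; linarith [hkraft]
      _ = 0 := by ring
  -- convert to logb 2
  have hlog2 : (0:ℝ) < Real.log 2 := Real.log_pos (by norm_num)
  have hsum2 : ∑ i, p i * (Real.logb 2 (q i) - Real.logb 2 (p i)) ≤ 0 := by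
    have : ∑ i, p i * (Real.logb 2 (q i) - Real.logb 2 (p i))
        = (∑ i, p i * (Real.log (q i) - Real.log (p i))) / Real.log 2 := by
      rw [Finset.sum_div]
      apply Finset.sum_congr rfl
      intro i _
      rw [Real.logb, Real.logb]
      field_simp
    rw [this]
    exact div_nonpos_of_nonpos_of_nonneg hsum hlog2.le
  have hlogq : ∀ i, Real.logb 2 (q i) = -((code i).length : ℝ) := by
    intro i
    rw [hq]
    simp only []
    rw [Real.logb_pow, Real.logb_inv, Real.logb_self_eq_one (by norm_num)]
    ring
  have : ∑ i, p i * (Real.logb 2 (q i) - Real.logb 2 (p i))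
      = (- ∑ i, p i * ((code i).length : ℝ)) + (- ∑ i, p i * Real.logb 2 (p i)) := by
    rw [← Finset.sum_neg_distrib, ← Finset.sum_neg_distrib, ← Finset.sum_add_distrib]
    apply Finset.sum_congr rfl
    intro i _
    rw [hlogq i]
    ring
  rw [this] at hsum2
  linarith
end

section
/- Monotonicity of the discrete-time Riccati fixed point in the noise covariance: let V ≻ 0, (A, C) detectable, and 0 ≺ W₁ ⪯ W₂. If P̃ and Q̃ are the unique positive definite solutions of A P̃ Aᵀ − P̃ − A P̃ Cᵀ (C P̃ Cᵀ + V)⁻¹ C P̃ Aᵀ + W₁ = 0 and A Q̃ Aᵀ − Q̃ − A Q̃ Cᵀ (C Q̃ Cᵀ + V)⁻¹ C Q̃ Aᵀ + W₂ = 0 respectively, then P̃ ⪯ Q̃. -/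
open Matrix

private noncomputable def qf {n : ℕ} (M : Matrix (Fin n) (Fin n) ℝ) (v : Fin n → ℝ) : ℝ :=
  v ⬝ᵥ M *ᵥ v

private lemma qf_continuous {n : ℕ} (M : Matrix (Fin n) (Fin n) ℝ) : Continuous (qf M) := by
  unfold qf dotProduct mulVec
  refine continuous_finset_sum _ fun i _ => (continuous_apply i).mul ?_
  unfold dotProduct
  exact continuous_finset_sum _ fun j _ => continuous_const.mul (continuous_apply j)

private lemma qf_smul {n : ℕ} (M : Matrix (Fin n) (Fin n) ℝ) (c : ℝ) (v : Fin n → ℝ) :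
    qf M (c • v) = c ^ 2 * qf M v := by
  simp [qf, mulVec_smul, smul_dotProduct, dotProduct_smul, smul_eq_mul]
  ring

private lemma qf_conj {n : ℕ} (M F : Matrix (Fin n) (Fin n) ℝ) (v : Fin n → ℝ) :
    qf (F * M * Fᵀ) v = qf M (Fᵀ *ᵥ v) := by
  rw [qf, qf, ← mulVec_mulVec, ← mulVec_mulVec, dotProduct_mulVec, ← mulVec_transpose]

private lemma qf_nonneg_of_posSemidef {n : ℕ} {S : Matrix (Fin n) (Fin n) ℝ}
    (hS : S.PosSemidef) (v : Fin n → ℝ) : 0 ≤ qf S v := by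
  simpa [qf] using hS.dotProduct_mulVec_nonneg v

private lemma qf_pos_of_posDef {n : ℕ} {S : Matrix (Fin n) (Fin n) ℝ}
    (hS : S.PosDef) {v : Fin n → ℝ} (hv : v ≠ 0) : 0 < qf S v := by
  simpa [qf] using hS.dotProduct_mulVec_pos hv

private lemma psd_of_lyap {n : ℕ} (Δ Q S T F : Matrix (Fin n) (Fin n) ℝ)
    (hΔH : Δ.IsHermitian) (hQpd : Q.PosDef) (hS : S.PosSemidef) (hT : T.PosDef)
    (hΔ : Δ = F * Δ * Fᵀ + S) (hQe : Q = F * Q * Fᵀ + T) : Δ.PosSemidef := by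
  by_contra hcon
  have hex : ∃ v, qf Δ v < 0 := by
    by_contra h
    push_neg at h
    exact hcon (Matrix.PosSemidef.of_dotProduct_mulVec_nonneg hΔH fun x => by simpa [qf] using h x)
  obtain ⟨v₁, hv₁⟩ := hex
  have hv₁0 : v₁ ≠ 0 := by
    rintro rfl
    simp [qf] at hv₁
  -- normalize
  have hn₁ : ‖v₁‖ ≠ 0 := norm_ne_zero_iff.mpr hv₁0
  set u₁ : Fin n → ℝ := ‖v₁‖⁻¹ • v₁ with hu₁def
  have hu₁ : u₁ ∈ Metric.sphere (0 : Fin n → ℝ) 1 := by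
    simp [mem_sphere_zero_iff_norm, hu₁def, norm_smul, inv_mul_cancel₀ hn₁]
  have hqu₁ : qf Δ u₁ < 0 := by
    rw [hu₁def, qf_smul]
    exact mul_neg_of_pos_of_neg (by positivity) hv₁
  -- maximize f on the sphere
  set f : (Fin n → ℝ) → ℝ := fun v => -qf Δ v / qf Q v with hfdef
  have hQpos : ∀ v : Fin n → ℝ, v ≠ 0 → 0 < qf Q v := fun v hv => qf_pos_of_posDef hQpd hv
  have hfc : ContinuousOn f (Metric.sphere (0 : Fin n → ℝ) 1) := by
    apply ContinuousOn.div ((qf_continuous Δ).neg.continuousOn) ((qf_continuous Q).continuousOn)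
    intro v hv
    have hvne : v ≠ 0 := by
      intro h
      rw [mem_sphere_zero_iff_norm, h] at hv
      simp at hv
    exact (hQpos v hvne).ne'
  obtain ⟨v₀, hv₀S, hmax'⟩ := (isCompact_sphere (0 : Fin n → ℝ) 1).exists_isMaxOn ⟨u₁, hu₁⟩ hfc
  have hmax : ∀ y ∈ Metric.sphere (0 : Fin n → ℝ) 1, f y ≤ f v₀ := fun y hy => hmax' hy
  have hv₀ne : v₀ ≠ 0 := by
    intro h
    rw [mem_sphere_zero_iff_norm, h] at hv₀S
    simp at hv₀S
  have hQv₀ : 0 < qf Q v₀ := hQpos v₀ hv₀ne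
  set α : ℝ := f v₀ with hαdef
  have hα : 0 < α := by
    have h1 : 0 < f u₁ := div_pos (by linarith) (hQpos u₁ (by
      intro h
      rw [mem_sphere_zero_iff_norm, h] at hu₁
      simp at hu₁))
    exact lt_of_lt_of_le h1 (hmax u₁ hu₁)
  -- key inequality
  have key : ∀ v : Fin n → ℝ, 0 ≤ qf Δ v + α * qf Q v := by
    intro v
    rcases eq_or_ne v 0 with rfl | hv
    · simp [qf]
    · have hnv : ‖v‖ ≠ 0 := norm_ne_zero_iff.mpr hv
      set u : Fin n → ℝ := ‖v‖⁻¹ • v with hudef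
      have hune : u ≠ 0 := by
        simp [hudef, smul_ne_zero_iff, hv, inv_ne_zero hnv]
      have huS : u ∈ Metric.sphere (0 : Fin n → ℝ) 1 := by
        simp [mem_sphere_zero_iff_norm, hudef, norm_smul, inv_mul_cancel₀ hnv]
      have h2 := hmax u huS
      rw [hfdef] at h2
      simp only at h2
      rw [div_le_iff₀ (hQpos u hune)] at h2
      have h3 : 0 ≤ qf Δ u + α * qf Q u := by linarith
      have e1 : qf Δ u = ‖v‖⁻¹ ^ 2 * qf Δ v := by rw [hudef, qf_smul]
      have e2 : qf Q u = ‖v‖⁻¹ ^ 2 * qf Q v := by rw [hudef, qf_smul]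
      have ht : 0 < ‖v‖⁻¹ ^ 2 := by positivity
      rw [e1, e2] at h3
      nlinarith [ht, h3]
  -- equality at the maximizer
  have heq₀ : qf Δ v₀ + α * qf Q v₀ = 0 := by
    have : α = -qf Δ v₀ / qf Q v₀ := rfl
    field_simp at this
    linarith
  -- contradiction
  have hΔv := congrArg (fun X => qf X v₀) hΔ
  have hQv := congrArg (fun X => qf X v₀) hQe
  rw [show qf (F * Δ * Fᵀ + S) v₀ = qf (F * Δ * Fᵀ) v₀ + qf S v₀ by
      simp [qf, add_mulVec, dotProduct_add], qf_conj] at hΔv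
  rw [show qf (F * Q * Fᵀ + T) v₀ = qf (F * Q * Fᵀ) v₀ + qf T v₀ by
      simp [qf, add_mulVec, dotProduct_add], qf_conj] at hQv
  have h4 := key (Fᵀ *ᵥ v₀)
  have h5 := qf_nonneg_of_posSemidef hS v₀
  have h6 := qf_pos_of_posDef hT hv₀ne
  nlinarith

theorem stmt_11 {n m : ℕ} (A : Matrix (Fin n) (Fin n) ℝ)
    (C : Matrix (Fin m) (Fin n) ℝ) (V : Matrix (Fin m) (Fin m) ℝ)
    (W₁ W₂ P Q : Matrix (Fin n) (Fin n) ℝ)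
    (hV : V.PosDef)
    (hdet : ∀ (μ : ℂ) (v : Fin n → ℂ), 1 ≤ ‖μ‖ →
      (A.map (algebraMap ℝ ℂ)).mulVec v = μ • v →
      (C.map (algebraMap ℝ ℂ)).mulVec v = 0 → v = 0)
    (hW₁ : W₁.PosDef) (hW12 : (W₂ - W₁).PosSemidef)
    (hP : P.PosDef)
    (hPeq : A * P * Aᵀ - P - A * P * Cᵀ * (C * P * Cᵀ + V)⁻¹ * C * P * Aᵀ + W₁ = 0)
    (hPuniq : ∀ P' : Matrix (Fin n) (Fin n) ℝ, P'.PosDef →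
      A * P' * Aᵀ - P' - A * P' * Cᵀ * (C * P' * Cᵀ + V)⁻¹ * C * P' * Aᵀ + W₁ = 0 → P' = P)
    (hQ : Q.PosDef)
    (hQeq : A * Q * Aᵀ - Q - A * Q * Cᵀ * (C * Q * Cᵀ + V)⁻¹ * C * Q * Aᵀ + W₂ = 0)
    (hQuniq : ∀ Q' : Matrix (Fin n) (Fin n) ℝ, Q'.PosDef →
      A * Q' * Aᵀ - Q' - A * Q' * Cᵀ * (C * Q' * Cᵀ + V)⁻¹ * C * Q' * Aᵀ + W₂ = 0 → Q' = Q) :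
    (Q - P).PosSemidef := by
  have hVsymm : Vᵀ = V := (conjTranspose_eq_transpose_of_trivial V).symm.trans hV.isHermitian
  have hW₁symm : W₁ᵀ = W₁ :=
    (conjTranspose_eq_transpose_of_trivial W₁).symm.trans hW₁.isHermitian
  have hW₂pd : W₂.PosDef := by
    have := hW₁.add_posSemidef hW12
    simpa using this
  have hW₂symm : W₂ᵀ = W₂ :=
    (conjTranspose_eq_transpose_of_trivial W₂).symm.trans hW₂pd.isHermitian
  -- symmetry of P and Q via uniqueness
  have hPsymm : Pᵀ = P := by
    apply hPuniq Pᵀ hP.transpose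
    have h := congrArg Matrix.transpose hPeq
    simp only [transpose_sub, transpose_add, transpose_mul, transpose_transpose,
      transpose_nonsing_inv, hVsymm, hW₁symm, transpose_zero] at h
    simpa only [Matrix.mul_assoc] using h
  have hQsymm : Qᵀ = Q := by
    apply hQuniq Qᵀ hQ.transpose
    have h := congrArg Matrix.transpose hQeq
    simp only [transpose_sub, transpose_add, transpose_mul, transpose_transpose,
      transpose_nonsing_inv, hVsymm, hW₂symm, transpose_zero] at h
    simpa only [Matrix.mul_assoc] using h
  -- abbreviations
  set M : Matrix (Fin m) (Fin m) ℝ := C * Q * Cᵀ + V with hMdef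
  set K : Matrix (Fin n) (Fin m) ℝ := A * Q * Cᵀ * M⁻¹ with hKdef
  set F : Matrix (Fin n) (Fin n) ℝ := A - K * C with hFdef
  set N : Matrix (Fin m) (Fin m) ℝ := C * P * Cᵀ + V with hNdef
  set L : Matrix (Fin n) (Fin m) ℝ := A * P * Cᵀ * N⁻¹ with hLdef
  set R : Matrix (Fin n) (Fin n) ℝ := (K - L) * N * (K - L)ᵀ with hRdef
  clear_value R L N F K M
  have hMpd : M.PosDef := by
    rw [hMdef]
    refine Matrix.PosDef.posSemidef_add ?_ hV
    have := hQ.posSemidef.mul_mul_conjTranspose_same C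
    rwa [conjTranspose_eq_transpose_of_trivial] at this
  have hNpd : N.PosDef := by
    rw [hNdef]
    refine Matrix.PosDef.posSemidef_add ?_ hV
    have := hP.posSemidef.mul_mul_conjTranspose_same C
    rwa [conjTranspose_eq_transpose_of_trivial] at this
  have hMdet : IsUnit M.det := hMpd.det_pos.ne'.isUnit
  have hNdet : IsUnit N.det := hNpd.det_pos.ne'.isUnit
  have hMK : K * M = A * Q * Cᵀ := by
    rw [hKdef, Matrix.mul_assoc, Matrix.nonsing_inv_mul _ hMdet, Matrix.mul_one]
  have hLN : L * N = A * P * Cᵀ := by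
    rw [hLdef, Matrix.mul_assoc, Matrix.nonsing_inv_mul _ hNdet, Matrix.mul_one]
  have hNsymm : Nᵀ = N := by
    rw [hNdef]
    simp [transpose_add, transpose_mul, transpose_transpose, hPsymm, hVsymm, Matrix.mul_assoc]
  have hNLt : N * Lᵀ = C * P * Aᵀ := by
    have h1 : N * Lᵀ = (L * Nᵀ)ᵀ := by rw [transpose_mul, transpose_transpose]
    rw [h1, hNsymm, hLN]
    simp [transpose_mul, transpose_transpose, hPsymm, Matrix.mul_assoc]
  -- closed-loop identity for Q
  have h7 : Q = A * Q * Aᵀ - K * C * Q * Aᵀ + W₂ := by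
    rw [← sub_eq_zero,
      show Q - (A * Q * Aᵀ - K * C * Q * Aᵀ + W₂)
        = -(A * Q * Aᵀ - Q - K * C * Q * Aᵀ + W₂) from by abel, hQeq, neg_zero]
  have expand : F * Q * Fᵀ + (K * V * Kᵀ + W₂)
      = A * Q * Aᵀ - K * C * Q * Aᵀ - (A * Q * Cᵀ - K * M) * Kᵀ + W₂ := by
    rw [hFdef, hMdef]
    simp only [transpose_sub, transpose_mul, Matrix.sub_mul, Matrix.mul_sub, Matrix.add_mul,
      Matrix.mul_add, Matrix.mul_assoc]
    abel
  have hQid : Q = F * Q * Fᵀ + (K * V * Kᵀ + W₂) := by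
    rw [expand, hMK, sub_self, Matrix.zero_mul, sub_zero]
    exact h7
  -- closed-loop inequality (as exact identity) for P
  have h8 : P = A * P * Aᵀ - L * C * P * Aᵀ + W₁ := by
    rw [← sub_eq_zero,
      show P - (A * P * Aᵀ - L * C * P * Aᵀ + W₁)
        = -(A * P * Aᵀ - P - L * C * P * Aᵀ + W₁) from by abel, hPeq, neg_zero]
  have hR2 : R = K * N * Kᵀ - K * (C * P * Aᵀ) - A * P * Cᵀ * Kᵀ + L * (C * P * Aᵀ) := by
    rw [hRdef]
    have e : (K - L) * N * (K - L)ᵀ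
        = K * N * Kᵀ - K * (N * Lᵀ) - L * N * Kᵀ + L * (N * Lᵀ) := by
      simp only [transpose_sub, Matrix.sub_mul, Matrix.mul_sub, Matrix.add_mul,
        Matrix.mul_add, Matrix.mul_assoc]
      abel
    rw [e, hNLt, hLN]
  have expandP : F * P * Fᵀ + (K * V * Kᵀ + W₁) - R = A * P * Aᵀ - L * C * P * Aᵀ + W₁ := by
    rw [hR2, hFdef, hNdef]
    simp only [transpose_sub, transpose_mul, Matrix.sub_mul, Matrix.mul_sub, Matrix.add_mul,
      Matrix.mul_add, Matrix.mul_assoc]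
    abel
  have hPid3 : P = F * P * Fᵀ + (K * V * Kᵀ + W₁) - R := h8.trans expandP.symm
  -- the difference equation
  have hΔeq : Q - P = F * (Q - P) * Fᵀ + ((W₂ - W₁) + R) := by
    calc Q - P = (F * Q * Fᵀ + (K * V * Kᵀ + W₂))
        - (F * P * Fᵀ + (K * V * Kᵀ + W₁) - R) := by rw [← hQid, ← hPid3]
      _ = F * (Q - P) * Fᵀ + ((W₂ - W₁) + R) := by rw [Matrix.mul_sub, Matrix.sub_mul]; abel
  -- positivity data
  have hRpsd : R.PosSemidef := by
    rw [hRdef]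
    have := hNpd.posSemidef.mul_mul_conjTranspose_same (K - L)
    rwa [conjTranspose_eq_transpose_of_trivial] at this
  have hSpsd : ((W₂ - W₁) + R).PosSemidef := hW12.add hRpsd
  have hTpd : (K * V * Kᵀ + W₂).PosDef := by
    refine Matrix.PosDef.posSemidef_add ?_ hW₂pd
    have := hV.posSemidef.mul_mul_conjTranspose_same K
    rwa [conjTranspose_eq_transpose_of_trivial] at this
  exact psd_of_lyap (Q - P) Q ((W₂ - W₁) + R) (K * V * Kᵀ + W₂) F
    (hQ.isHermitian.sub hP.isHermitian) hQ hSpsd hTpd hΔeq hQid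
end

section
/- One-step Riccati recursion monotonicity: let V ≻ 0 and define the map R_W(P) = A P Aᵀ − A P Cᵀ (C P Cᵀ + V)⁻¹ C P Aᵀ + W on positive semidefinite matrices. Then for fixed W, P₁ ⪯ P₂ implies R_W(P₁) ⪯ R_W(P₂); and for fixed P, W₁ ⪯ W₂ implies R_{W₁}(P) ⪯ R_{W₂}(P). -/
open Matrix

/-- One step of the discrete-time Riccati recursion
`R_W(P) = A P Aᵀ − A P Cᵀ (C P Cᵀ + V)⁻¹ C P Aᵀ + W`. -/
noncomputable def riccatiStep {n m : ℕ} (A : Matrix (Fin n) (Fin n) ℝ)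
    (C : Matrix (Fin m) (Fin n) ℝ) (V : Matrix (Fin m) (Fin m) ℝ)
    (W P : Matrix (Fin n) (Fin n) ℝ) : Matrix (Fin n) (Fin n) ℝ :=
  A * P * Aᵀ - A * P * Cᵀ * (C * P * Cᵀ + V)⁻¹ * C * P * Aᵀ + W

lemma key_identity {n m : ℕ} (A : Matrix (Fin n) (Fin n) ℝ)
    (C : Matrix (Fin m) (Fin n) ℝ) (S N : Matrix (Fin m) (Fin m) ℝ)
    (W P : Matrix (Fin n) (Fin n) ℝ) (hPt : Pᵀ = P) (hNt : Nᵀ = N)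
    (hSN : ∀ X : Matrix (Fin m) (Fin n) ℝ, S * (N * X) = X)
    (hNS : ∀ X : Matrix (Fin m) (Fin n) ℝ, N * (S * X) = X)
    (L : Matrix (Fin n) (Fin m) ℝ) :
    (A - L * C) * P * (A - L * C)ᵀ + L * (S - C * P * Cᵀ) * Lᵀ + W =
      (A * P * Aᵀ - A * P * Cᵀ * N * C * P * Aᵀ + W) +
        (L - A * P * Cᵀ * N) * S * (L - A * P * Cᵀ * N)ᵀ := by
  simp only [Matrix.sub_mul, Matrix.mul_sub, Matrix.add_mul, Matrix.mul_add,
    transpose_mul, transpose_sub, transpose_add, transpose_transpose, hPt, hNt,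
    Matrix.mul_assoc, hSN, hNS]
  abel

lemma aux_facts {n m : ℕ} (C : Matrix (Fin m) (Fin n) ℝ)
    (V : Matrix (Fin m) (Fin m) ℝ) (hV : V.PosDef)
    (P : Matrix (Fin n) (Fin n) ℝ) (hP : P.PosSemidef) :
    (C * P * Cᵀ + V).PosDef ∧ ((C * P * Cᵀ + V)⁻¹)ᵀ = (C * P * Cᵀ + V)⁻¹ ∧
      (∀ X : Matrix (Fin m) (Fin n) ℝ,
        (C * P * Cᵀ + V) * ((C * P * Cᵀ + V)⁻¹ * X) = X) ∧
      (∀ X : Matrix (Fin m) (Fin n) ℝ,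
        (C * P * Cᵀ + V)⁻¹ * ((C * P * Cᵀ + V) * X) = X) := by
  have hCPC : (C * P * Cᵀ).PosSemidef := by
    have := hP.mul_mul_conjTranspose_same C
    rwa [conjTranspose_eq_transpose_of_trivial] at this
  have hS : (C * P * Cᵀ + V).PosDef := Matrix.PosDef.posSemidef_add hCPC hV
  have hdet : IsUnit (C * P * Cᵀ + V).det := hS.det_pos.ne'.isUnit
  have hSt : (C * P * Cᵀ + V)ᵀ = C * P * Cᵀ + V := by
    have := hS.isHermitian.eq
    rwa [conjTranspose_eq_transpose_of_trivial] at this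
  refine ⟨hS, ?_, ?_, ?_⟩
  · rw [Matrix.transpose_nonsing_inv, hSt]
  · intro X
    rw [← Matrix.mul_assoc, Matrix.mul_nonsing_inv _ hdet, Matrix.one_mul]
  · intro X
    rw [← Matrix.mul_assoc, Matrix.nonsing_inv_mul _ hdet, Matrix.one_mul]

theorem stmt_12 {n m : ℕ} (A : Matrix (Fin n) (Fin n) ℝ)
    (C : Matrix (Fin m) (Fin n) ℝ) (V : Matrix (Fin m) (Fin m) ℝ)
    (hV : V.PosDef) :
    (∀ W P₁ P₂ : Matrix (Fin n) (Fin n) ℝ, W.PosSemidef →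
      P₁.PosSemidef → P₂.PosSemidef → (P₂ - P₁).PosSemidef →
      (riccatiStep A C V W P₂ - riccatiStep A C V W P₁).PosSemidef) ∧
    (∀ W₁ W₂ P : Matrix (Fin n) (Fin n) ℝ, P.PosSemidef →
      W₁.PosSemidef → W₂.PosSemidef → (W₂ - W₁).PosSemidef →
      (riccatiStep A C V W₂ P - riccatiStep A C V W₁ P).PosSemidef) := by
  constructor
  · intro W P₁ P₂ _hW hP₁ hP₂ hP21
    obtain ⟨hS₁, hN₁t, hS₁N, hN₁S⟩ := aux_facts C V hV P₁ hP₁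
    obtain ⟨hS₂, hN₂t, hS₂N, hN₂S⟩ := aux_facts C V hV P₂ hP₂
    have hP₁t : P₁ᵀ = P₁ := by
      have := hP₁.isHermitian.eq
      rwa [conjTranspose_eq_transpose_of_trivial] at this
    have hP₂t : P₂ᵀ = P₂ := by
      have := hP₂.isHermitian.eq
      rwa [conjTranspose_eq_transpose_of_trivial] at this
    set K₁ := A * P₁ * Cᵀ * (C * P₁ * Cᵀ + V)⁻¹ with hK₁
    set K₂ := A * P₂ * Cᵀ * (C * P₂ * Cᵀ + V)⁻¹ with hK₂
    have hVeq₁ : C * P₁ * Cᵀ + V - C * P₁ * Cᵀ = V := add_sub_cancel_left _ _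
    have hVeq₂ : C * P₂ * Cᵀ + V - C * P₂ * Cᵀ = V := add_sub_cancel_left _ _
    -- R₂ equals f(K₂, P₂)
    have e2 := key_identity A C (C * P₂ * Cᵀ + V) (C * P₂ * Cᵀ + V)⁻¹ W P₂
      hP₂t hN₂t hS₂N hN₂S K₂
    rw [hVeq₂, ← hK₂, sub_self, Matrix.zero_mul, Matrix.zero_mul, add_zero] at e2
    -- f(K₂, P₁) = R₁ + (K₂ - K₁) S₁ (K₂ - K₁)ᵀ
    have e1 := key_identity A C (C * P₁ * Cᵀ + V) (C * P₁ * Cᵀ + V)⁻¹ W P₁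
      hP₁t hN₁t hS₁N hN₁S K₂
    rw [hVeq₁, ← hK₁] at e1
    have e3 : ((A - K₂ * C) * P₂ * (A - K₂ * C)ᵀ + K₂ * V * K₂ᵀ + W) -
        ((A - K₂ * C) * P₁ * (A - K₂ * C)ᵀ + K₂ * V * K₂ᵀ + W) =
        (A - K₂ * C) * (P₂ - P₁) * (A - K₂ * C)ᵀ := by
      simp only [Matrix.mul_sub, Matrix.sub_mul]
      abel
    have hmain : riccatiStep A C V W P₂ - riccatiStep A C V W P₁ =
        (A - K₂ * C) * (P₂ - P₁) * (A - K₂ * C)ᵀ +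
          (K₂ - K₁) * (C * P₁ * Cᵀ + V) * (K₂ - K₁)ᵀ := by
      rw [riccatiStep, riccatiStep, ← e2, ← e3]
      rw [e1]
      abel
    rw [hmain]
    have hD₁ : ((A - K₂ * C) * (P₂ - P₁) * (A - K₂ * C)ᵀ).PosSemidef := by
      have := hP21.mul_mul_conjTranspose_same (A - K₂ * C)
      rwa [conjTranspose_eq_transpose_of_trivial] at this
    have hD₂ : ((K₂ - K₁) * (C * P₁ * Cᵀ + V) * (K₂ - K₁)ᵀ).PosSemidef := by
      have := hS₁.posSemidef.mul_mul_conjTranspose_same (K₂ - K₁)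
      rwa [conjTranspose_eq_transpose_of_trivial] at this
    exact hD₁.add hD₂
  · intro W₁ W₂ P _hP _hW₁ _hW₂ hW21
    have : riccatiStep A C V W₂ P - riccatiStep A C V W₁ P = W₂ - W₁ := by
      rw [riccatiStep, riccatiStep]
      abel
    rwa [this]
end
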